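/- arXiv:1812.10465 — 2 statements merged into one kernel-verified Lean document; each statement's English description precedes it below -/
import Mathlib

section
/- Let k, t, n ≥ 2 be integers with n ≥ 75t, and let φ be a Gallai k-coloring of K_n such that no set S of ⌈n/3⌉ vertices has the property that the restriction of φ to the edges inside S belongs to F(⌈n/3⌉, k). Then w(φ,k) ≤ t·k²·2^{n−t}. -/
set_option maxHeartbeats 1000000


/-- The edge set of the complete graph `K_n` on the labeled vertex set `Fin n`:
unordered pairs of distinct vertices. -/
abbrev Edge (n : ℕ) := {e : Sym2 (Fin n) // ¬ e.IsDiag}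

/-- The edge joining two distinct vertices. -/
def edgeOf {n : ℕ} (a b : Fin n) (h : a ≠ b) : Edge n :=
  ⟨s(a, b), fun hd => h (Sym2.mk_isDiag_iff.mp hd)⟩

/-- A Gallai coloring: an edge coloring of `K_n` with no rainbow triangle, i.e. no
triangle whose three edges receive pairwise distinct colors. -/
def IsGallai {n k : ℕ} (φ : Edge n → Fin k) : Prop :=
  ∀ a b c : Fin n, ∀ (hab : a ≠ b) (hbc : b ≠ c) (hac : a ≠ c),
    φ (edgeOf a b hab) = φ (edgeOf b c hbc) ∨
    φ (edgeOf b c hbc) = φ (edgeOf a c hac) ∨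
    φ (edgeOf a b hab) = φ (edgeOf a c hac)

/-- `c(n,k)`: the number of Gallai `k`-colorings of `K_n` (colorings as functions on
the edge set, with colors in a set of `k` colors, not all of which need be used). -/
noncomputable def gallaiCount (n k : ℕ) : ℕ :=
  Nat.card {φ : Edge n → Fin k // IsGallai φ}

/-- `φ'` is an extension of `φ` to `K_{n+1}`, where the new vertex is `Fin.last n` and
the old vertices are embedded via `Fin.castSucc`. -/
def Extends {n k : ℕ} (φ : Edge n → Fin k) (φ' : Edge (n + 1) → Fin k) : Prop :=
  ∀ a b : Fin n, ∀ h : a ≠ b,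
    φ' (edgeOf a.castSucc b.castSucc (fun he => h (Fin.castSucc_injective n he))) =
      φ (edgeOf a b h)

/-- `w(φ,k)`: the number of ways to color the `n` edges joining a new vertex to the
vertices of `K_n` with colors from the `k` colors so that the resulting coloring of
`K_{n+1}` is Gallai; equivalently, the number of Gallai colorings of `K_{n+1}`
extending `φ`. -/
noncomputable def extCount {n k : ℕ} (φ : Edge n → Fin k) : ℕ :=
  Nat.card {φ' : Edge (n + 1) → Fin k // IsGallai φ' ∧ Extends φ φ'}

/-- Membership in `F(n,k)`: there exist a color `c` and a partition of the vertex set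
into parts, each part assigned a distinct color from `[k] \ {c}` (the parts are the
fibers of `p`), such that every edge joining two different parts has color `c` and
every edge inside the part assigned color `i` has color `i` or color `c`. -/
def InF {n k : ℕ} (φ : Edge n → Fin k) : Prop :=
  ∃ c : Fin k, ∃ p : Fin n → Fin k, (∀ v, p v ≠ c) ∧
    ∀ a b : Fin n, ∀ h : a ≠ b,
      (p a ≠ p b → φ (edgeOf a b h) = c) ∧
      (p a = p b → φ (edgeOf a b h) = p a ∨ φ (edgeOf a b h) = c)

/-- The restriction of `φ` to the edges inside the vertex set `S` belongs to
`F(|S|, k)`. -/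
def InFOn {n k : ℕ} (φ : Edge n → Fin k) (S : Finset (Fin n)) : Prop :=
  ∃ c : Fin k, ∃ p : {v : Fin n // v ∈ S} → Fin k, (∀ v, p v ≠ c) ∧
    ∀ a b : {v : Fin n // v ∈ S}, ∀ h : (a : Fin n) ≠ (b : Fin n),
      (p a ≠ p b → φ (edgeOf a b h) = c) ∧
      (p a = p b → φ (edgeOf a b h) = p a ∨ φ (edgeOf a b h) = c)

namespace NBF
open Finset
open scoped Classical

variable {n k : ℕ}

/-- Total symmetric color function on ordered pairs of vertices. -/
noncomputable def cf (hk : 0 < k) (φ : Edge n → Fin k) (a b : Fin n) : Fin k :=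
  if h : a = b then ⟨0, hk⟩ else φ (edgeOf a b h)

lemma edgeOf_comm {a b : Fin n} (h : a ≠ b) :
    edgeOf a b h = edgeOf b a h.symm := Subtype.ext Sym2.eq_swap

lemma cf_eq (hk : 0 < k) (φ : Edge n → Fin k) {a b : Fin n} (h : a ≠ b) :
    cf hk φ a b = φ (edgeOf a b h) := dif_neg h

lemma cf_comm (hk : 0 < k) (φ : Edge n → Fin k) (a b : Fin n) :
    cf hk φ a b = cf hk φ b a := by
  rcases eq_or_ne a b with rfl | h
  · rfl
  · rw [cf_eq hk φ h, cf_eq hk φ h.symm, edgeOf_comm h]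

/-- `ψ` (a coloring of the star at a new vertex) creates no rainbow triangle with `φ`. -/
def Valid (hk : 0 < k) (φ : Edge n → Fin k) (ψ : Fin n → Fin k) : Prop :=
  ∀ a b : Fin n, a ≠ b → (ψ a = ψ b ∨ ψ a = cf hk φ a b ∨ ψ b = cf hk φ a b)

/-- Colors that the revealed vertices `R` (with values `ψ|R`) still allow at `v`. -/
noncomputable def allowed (hk : 0 < k) (φ : Edge n → Fin k) (ψ : Fin n → Fin k)
    (R : Finset (Fin n)) (v : Fin n) : Finset (Fin k) :=
  univ.filter fun x => ∀ w ∈ R, ψ w = cf hk φ w v ∨ x = ψ w ∨ x = cf hk φ w v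

variable {hk : 0 < k} {φ : Edge n → Fin k} {ψ ψ₁ ψ₂ : Fin n → Fin k}

lemma mem_allowed {R : Finset (Fin n)} {v : Fin n} {x : Fin k} :
    x ∈ allowed hk φ ψ R v ↔
      ∀ w ∈ R, ψ w = cf hk φ w v ∨ x = ψ w ∨ x = cf hk φ w v := by
  simp [allowed]

lemma allowed_anti {R S : Finset (Fin n)} (h : R ⊆ S) (v : Fin n) :
    allowed hk φ ψ S v ⊆ allowed hk φ ψ R v := by
  intro x hx
  rw [mem_allowed] at hx ⊢
  exact fun w hw => hx w (h hw)

lemma allowed_congr {R : Finset (Fin n)} (h : ∀ w ∈ R, ψ₁ w = ψ₂ w) (v : Fin n) :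
    allowed hk φ ψ₁ R v = allowed hk φ ψ₂ R v := by
  ext x
  rw [mem_allowed, mem_allowed]
  constructor <;> intro hx w hw <;> have := hx w hw <;> rw [h w hw] at * <;> tauto

lemma allowed_insert {R : Finset (Fin n)} {w v : Fin n} :
    allowed hk φ ψ (insert w R) v =
      (allowed hk φ ψ R v).filter
        (fun x => ψ w = cf hk φ w v ∨ x = ψ w ∨ x = cf hk φ w v) := by
  ext x
  simp only [mem_allowed, Finset.mem_filter, Finset.mem_insert]
  constructor
  · intro hx
    exact ⟨fun u hu => hx u (Or.inr hu), hx w (Or.inl rfl)⟩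
  · rintro ⟨hx, hw⟩ u hu
    rcases hu with rfl | hu
    · exact hw
    · exact hx u hu

lemma valid_mem_allowed (hval : Valid hk φ ψ) {R : Finset (Fin n)} {v : Fin n}
    (hv : v ∉ R) : ψ v ∈ allowed hk φ ψ R v := by
  rw [mem_allowed]
  intro w hw
  have hne : w ≠ v := fun he => hv (he ▸ hw)
  have := hval w v hne
  tauto

/-- If three or more colors are allowed at `v`, every revealed vertex matches. -/
lemma allowed_high_card {R : Finset (Fin n)} {v : Fin n}
    (h : 3 ≤ (allowed hk φ ψ R v).card) :
    ∀ w ∈ R, ψ w = cf hk φ w v := by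
  intro w hw
  by_contra hne
  have hsub : allowed hk φ ψ R v ⊆ {ψ w, cf hk φ w v} := by
    intro x hx
    have := mem_allowed.mp hx w hw
    simp only [Finset.mem_insert, Finset.mem_singleton]
    tauto
  have := Finset.card_le_card hsub
  have h2 : ({ψ w, cf hk φ w v} : Finset (Fin k)).card ≤ 2 :=
    Finset.card_insert_le _ _ |>.trans (by simp)
  omega

/-- `u` would be newly forced by revealing value `x` at `v`. -/
def NFa (hk : 0 < k) (φ : Edge n → Fin k) (ψ : Fin n → Fin k)
    (R : Finset (Fin n)) (v : Fin n) (x : Fin k) (u : Fin n) : Prop :=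
  u ≠ v ∧ u ∉ R ∧ 2 ≤ (allowed hk φ ψ R u).card ∧
    ((allowed hk φ ψ R u).filter
      (fun y => x = cf hk φ v u ∨ y = x ∨ y = cf hk φ v u)).card ≤ 1

lemma NFa_congr {R : Finset (Fin n)} (h : ∀ w ∈ R, ψ₁ w = ψ₂ w) :
    NFa hk φ ψ₁ R = NFa hk φ ψ₂ R := by
  funext v x u
  unfold NFa
  rw [allowed_congr h]

noncomputable def FoS (hk : 0 < k) (φ : Edge n → Fin k) (ψ : Fin n → Fin k)
    (R : Finset (Fin n)) : Finset (Fin n) :=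
  Rᶜ.filter fun v => (allowed hk φ ψ R v).card ≤ 1

noncomputable def BnS (hk : 0 < k) (φ : Edge n → Fin k) (ψ : Fin n → Fin k)
    (R : Finset (Fin n)) : Finset (Fin n) :=
  Rᶜ.filter fun v => 3 ≤ (allowed hk φ ψ R v).card

noncomputable def ChS (hk : 0 < k) (φ : Edge n → Fin k) (ψ : Fin n → Fin k)
    (R : Finset (Fin n)) : Finset (Fin n) :=
  Rᶜ.filter fun v => ∀ x ∈ allowed hk φ ψ R v, ∃ u ∈ Rᶜ, NFa hk φ ψ R v x u

noncomputable def rule (hn : 0 < n) (hk : 0 < k) (φ : Edge n → Fin k)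
    (ψ : Fin n → Fin k) (R : Finset (Fin n)) : Fin n :=
  if hU : (Rᶜ : Finset (Fin n)).Nonempty then
    if hF : (FoS hk φ ψ R).Nonempty then (FoS hk φ ψ R).min' hF
    else if hB : (BnS hk φ ψ R).Nonempty then (BnS hk φ ψ R).min' hB
    else if hC : (ChS hk φ ψ R).Nonempty then (ChS hk φ ψ R).min' hC
    else Rᶜ.min' hU
  else ⟨0, hn⟩

lemma rule_congr (hn : 0 < n) {R : Finset (Fin n)} (h : ∀ w ∈ R, ψ₁ w = ψ₂ w) :
    rule hn hk φ ψ₁ R = rule hn hk φ ψ₂ R := by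
  have hA : allowed hk φ ψ₁ R = allowed hk φ ψ₂ R := funext (allowed_congr h)
  have h1 : FoS hk φ ψ₁ R = FoS hk φ ψ₂ R := by unfold FoS; rw [hA]
  have h2 : BnS hk φ ψ₁ R = BnS hk φ ψ₂ R := by unfold BnS; rw [hA]
  have h3 : ChS hk φ ψ₁ R = ChS hk φ ψ₂ R := by unfold ChS; rw [hA, NFa_congr h]
  unfold rule
  rw [h1, h2, h3]

lemma rule_mem (hn : 0 < n) {R : Finset (Fin n)} (hU : (Rᶜ : Finset (Fin n)).Nonempty) :
    rule hn hk φ ψ R ∈ (Rᶜ : Finset (Fin n)) := by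
  unfold rule
  rw [dif_pos hU]
  split_ifs with hF hB hC
  · exact Finset.filter_subset _ _ ((FoS hk φ ψ R).min'_mem hF)
  · exact Finset.filter_subset _ _ ((BnS hk φ ψ R).min'_mem hB)
  · exact Finset.filter_subset _ _ ((ChS hk φ ψ R).min'_mem hC)
  · exact Rᶜ.min'_mem hU

/-- The revealed set after `i` steps. -/
noncomputable def Rset (hn : 0 < n) (hk : 0 < k) (φ : Edge n → Fin k)
    (ψ : Fin n → Fin k) : ℕ → Finset (Fin n)
  | 0 => ∅
  | i + 1 => insert (rule hn hk φ ψ (Rset hn hk φ ψ i)) (Rset hn hk φ ψ i)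

/-- The vertex revealed at step `i`. -/
noncomputable def rv (hn : 0 < n) (hk : 0 < k) (φ : Edge n → Fin k)
    (ψ : Fin n → Fin k) (i : ℕ) : Fin n :=
  rule hn hk φ ψ (Rset hn hk φ ψ i)

variable {hn : 0 < n}

lemma Rset_succ (i : ℕ) :
    Rset hn hk φ ψ (i + 1) = insert (rv hn hk φ ψ i) (Rset hn hk φ ψ i) := rfl

lemma Rset_card : ∀ i, i ≤ n → (Rset hn hk φ ψ i).card = i := by
  intro i
  induction i with
  | zero => simp [Rset]
  | succ i ih =>
    intro hin
    have hci : (Rset hn hk φ ψ i).card = i := ih (by omega)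
    have hU : ((Rset hn hk φ ψ i)ᶜ : Finset (Fin n)).Nonempty := by
      rw [← Finset.card_pos, Finset.card_compl, hci]
      simp only [Fintype.card_fin]
      omega
    have hmem := rule_mem (ψ := ψ) (φ := φ) (hk := hk) hn hU
    rw [Finset.mem_compl] at hmem
    have hmem' : rv hn hk φ ψ i ∉ Rset hn hk φ ψ i := hmem
    rw [Rset_succ, Finset.card_insert_of_notMem hmem', hci]

lemma rv_not_mem {i : ℕ} (hi : i < n) : rv hn hk φ ψ i ∉ Rset hn hk φ ψ i := by
  have hci : (Rset hn hk φ ψ i).card = i := Rset_card i (by omega)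
  have hU : ((Rset hn hk φ ψ i)ᶜ : Finset (Fin n)).Nonempty := by
    rw [← Finset.card_pos, Finset.card_compl, hci]
    simp only [Fintype.card_fin]
    omega
  have hmem := rule_mem (ψ := ψ) (φ := φ) (hk := hk) hn hU
  rwa [Finset.mem_compl] at hmem

lemma Rset_mono : ∀ {i j : ℕ}, i ≤ j → Rset hn hk φ ψ i ⊆ Rset hn hk φ ψ j := by
  intro i j hij
  induction j with
  | zero => have : i = 0 := by omega
            subst this; exact subset_rfl
  | succ j ih =>
    rcases Nat.lt_or_ge i (j+1) with h | h
    · exact (ih (by omega)).trans (by rw [Rset_succ]; exact Finset.subset_insert _ _)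
    · have : i = j + 1 := by omega
      subst this; exact subset_rfl

lemma rv_mem {i j : ℕ} (h : i < j) : rv hn hk φ ψ i ∈ Rset hn hk φ ψ j := by
  have : rv hn hk φ ψ i ∈ Rset hn hk φ ψ (i+1) := by
    rw [Rset_succ]; exact Finset.mem_insert_self _ _
  exact Rset_mono (by omega) this

lemma rv_inj {i j : ℕ} (hij : i < j) (hjn : j < n) :
    rv hn hk φ ψ i ≠ rv hn hk φ ψ j := by
  intro he
  exact rv_not_mem hjn (he ▸ rv_mem hij)

lemma Rset_univ : Rset hn hk φ ψ n = univ := by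
  apply Finset.eq_univ_of_card
  rw [Rset_card n le_rfl, Fintype.card_fin]

lemma exists_rv_between : ∀ {a b : ℕ} {w : Fin n}, a ≤ b → w ∈ Rset hn hk φ ψ b →
    w ∉ Rset hn hk φ ψ a → ∃ j, a ≤ j ∧ j < b ∧ rv hn hk φ ψ j = w := by
  intro a b
  induction b with
  | zero =>
    intro w hab hw hwa
    simp [Rset] at hw
  | succ b ih =>
    intro w hab hw hwa
    rcases Nat.lt_or_ge a (b+1) with h | h
    · rw [Rset_succ, Finset.mem_insert] at hw
      rcases hw with he | hw
      · exact ⟨b, by omega, by omega, he.symm⟩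
      · exact (ih (by omega) hw hwa).imp fun j ⟨h1, h2, h3⟩ => ⟨h1, by omega, h3⟩
    · have : a = b + 1 := by omega
      subst this
      exact absurd hw hwa

/-- Number of colors allowed at the vertex revealed at step `i`. -/
noncomputable def aC (hn : 0 < n) (hk : 0 < k) (φ : Edge n → Fin k)
    (ψ : Fin n → Fin k) (i : ℕ) : ℕ :=
  (allowed hk φ ψ (Rset hn hk φ ψ i) (rv hn hk φ ψ i)).card

def stF (hn : 0 < n) (hk : 0 < k) (φ : Edge n → Fin k) (ψ : Fin n → Fin k)
    (i : ℕ) : Prop := aC hn hk φ ψ i ≤ 1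

def stB (hn : 0 < n) (hk : 0 < k) (φ : Edge n → Fin k) (ψ : Fin n → Fin k)
    (i : ℕ) : Prop := 3 ≤ aC hn hk φ ψ i

def stT (hn : 0 < n) (hk : 0 < k) (φ : Edge n → Fin k) (ψ : Fin n → Fin k)
    (i : ℕ) : Prop := aC hn hk φ ψ i = 2

def chg (hn : 0 < n) (hk : 0 < k) (φ : Edge n → Fin k) (ψ : Fin n → Fin k)
    (i : ℕ) : Prop := (ChS hk φ ψ (Rset hn hk φ ψ i)).Nonempty

lemma compl_nonempty {i : ℕ} (hi : i < n) :
    ((Rset hn hk φ ψ i)ᶜ : Finset (Fin n)).Nonempty := by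
  rw [← Finset.card_pos, Finset.card_compl, Rset_card i (by omega)]
  simp only [Fintype.card_fin]
  omega

/-- If the step is not forced-type, the forced set must be empty. -/
lemma FoS_empty {i : ℕ} (hi : i < n) (h : ¬ stF hn hk φ ψ i) :
    ¬ (FoS hk φ ψ (Rset hn hk φ ψ i)).Nonempty := by
  intro hF
  apply h
  unfold stF aC
  have : rv hn hk φ ψ i ∈ FoS hk φ ψ (Rset hn hk φ ψ i) := by
    unfold rv rule
    rw [dif_pos (compl_nonempty hi), dif_pos hF]
    exact Finset.min'_mem _ _
  exact (Finset.mem_filter.mp this).2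

lemma BnS_empty {i : ℕ} (hi : i < n) (hF : ¬ stF hn hk φ ψ i)
    (h : ¬ stB hn hk φ ψ i) :
    ¬ (BnS hk φ ψ (Rset hn hk φ ψ i)).Nonempty := by
  intro hB
  apply h
  unfold stB aC
  have : rv hn hk φ ψ i ∈ BnS hk φ ψ (Rset hn hk φ ψ i) := by
    unfold rv rule
    rw [dif_pos (compl_nonempty hi), dif_neg (FoS_empty hi hF), dif_pos hB]
    exact Finset.min'_mem _ _
  exact (Finset.mem_filter.mp this).2

/-- At a two-type step, every unrevealed vertex has exactly two allowed colors. -/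
lemma two_all {i : ℕ} (hi : i < n) (h : stT hn hk φ ψ i) :
    ∀ v ∈ ((Rset hn hk φ ψ i)ᶜ : Finset (Fin n)),
      (allowed hk φ ψ (Rset hn hk φ ψ i) v).card = 2 := by
  intro v hv
  have hF : ¬ stF hn hk φ ψ i := by unfold stF; unfold stT at h; omega
  have hB : ¬ stB hn hk φ ψ i := by unfold stB; unfold stT at h; omega
  have h1 : v ∉ FoS hk φ ψ (Rset hn hk φ ψ i) := by
    intro hmem
    exact FoS_empty hi hF ⟨v, hmem⟩
  have h2 : v ∉ BnS hk φ ψ (Rset hn hk φ ψ i) := by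
    intro hmem
    exact BnS_empty hi hF hB ⟨v, hmem⟩
  rw [FoS, Finset.mem_filter] at h1
  rw [BnS, Finset.mem_filter] at h2
  have c1 : ¬ (allowed hk φ ψ (Rset hn hk φ ψ i) v).card ≤ 1 := fun hc => h1 ⟨hv, hc⟩
  have c2 : ¬ 3 ≤ (allowed hk φ ψ (Rset hn hk φ ψ i) v).card := fun hc => h2 ⟨hv, hc⟩
  omega

/-- At a charged two-type step, the chosen vertex lies in the charged set. -/
lemma chosen_in_ChS {i : ℕ} (hi : i < n) (h : stT hn hk φ ψ i)
    (hc : chg hn hk φ ψ i) :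
    rv hn hk φ ψ i ∈ ChS hk φ ψ (Rset hn hk φ ψ i) := by
  have hF : ¬ stF hn hk φ ψ i := by unfold stF; unfold stT at h; omega
  have hB : ¬ stB hn hk φ ψ i := by unfold stB; unfold stT at h; omega
  have hc' : (ChS hk φ ψ (Rset hn hk φ ψ i)).Nonempty := hc
  unfold rv rule
  rw [dif_pos (compl_nonempty hi), dif_neg (FoS_empty hi hF),
    dif_neg (BnS_empty hi hF hB), dif_pos hc']
  exact Finset.min'_mem _ _

/-- At an uncharged two-type step, every unrevealed vertex has a harmless color. -/
lemma free_struct {i : ℕ} (hi : i < n) (h : stT hn hk φ ψ i)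
    (hc : ¬ chg hn hk φ ψ i) :
    ∀ v ∈ ((Rset hn hk φ ψ i)ᶜ : Finset (Fin n)),
      ∃ x ∈ allowed hk φ ψ (Rset hn hk φ ψ i) v,
        ∀ u ∈ ((Rset hn hk φ ψ i)ᶜ : Finset (Fin n)),
          ¬ NFa hk φ ψ (Rset hn hk φ ψ i) v x u := by
  intro v hv
  have : v ∉ ChS hk φ ψ (Rset hn hk φ ψ i) := by
    intro hmem
    exact hc ⟨v, hmem⟩
  rw [ChS, Finset.mem_filter] at this
  push_neg at this
  exact this hv

/-- Number of two-type steps before step `i`. -/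
noncomputable def countT (hn : 0 < n) (hk : 0 < k) (φ : Edge n → Fin k)
    (ψ : Fin n → Fin k) (i : ℕ) : ℕ :=
  ((Finset.range i).filter (stT hn hk φ ψ)).card

lemma countT_mono {i j : ℕ} (h : i ≤ j) :
    countT hn hk φ ψ i ≤ countT hn hk φ ψ j :=
  Finset.card_le_card (Finset.filter_subset_filter _ (by
    intro x hx; rw [Finset.mem_range] at *; omega))

lemma countT_succ_of {i : ℕ} (h : stT hn hk φ ψ i) :
    countT hn hk φ ψ (i + 1) = countT hn hk φ ψ i + 1 := by
  unfold countT
  rw [Finset.range_add_one, Finset.filter_insert, if_pos h,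
    Finset.card_insert_of_notMem (by simp)]

lemma countT_lt {i j : ℕ} (hij : i < j) (h : stT hn hk φ ψ i) :
    countT hn hk φ ψ i < countT hn hk φ ψ j := by
  have h1 := countT_succ_of (hn := hn) h
  have h2 : countT hn hk φ ψ (i + 1) ≤ countT hn hk φ ψ j :=
    countT_mono (Nat.succ_le_of_lt hij)
  omega

lemma countT_inj {i j : ℕ} (hi : stT hn hk φ ψ i) (hj : stT hn hk φ ψ j)
    (h : countT hn hk φ ψ i = countT hn hk φ ψ j) : i = j := by
  rcases lt_trichotomy i j with hl | he | hl
  · have := countT_lt hl hi; omega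
  · exact he
  · have := countT_lt hl hj; omega

/-- Charged two-steps inject into forced steps. -/
lemma charged_le_forced (hval : Valid hk φ ψ) :
    ((Finset.range n).filter (fun i => stT hn hk φ ψ i ∧ chg hn hk φ ψ i)).card ≤
      ((Finset.range n).filter (stF hn hk φ ψ)).card := by
  classical
  set C := (Finset.range n).filter (fun i => stT hn hk φ ψ i ∧ chg hn hk φ ψ i) with hC
  have key : ∀ i ∈ C,
      ∃ j, j ∈ (Finset.range n).filter (stF hn hk φ ψ) ∧ i < j ∧
        2 ≤ (allowed hk φ ψ (Rset hn hk φ ψ i) (rv hn hk φ ψ j)).card ∧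
        (allowed hk φ ψ (Rset hn hk φ ψ (i+1)) (rv hn hk φ ψ j)).card ≤ 1 := by
    intro i hi
    rw [hC, Finset.mem_filter, Finset.mem_range] at hi
    obtain ⟨hin, hT, hc⟩ := hi
    have hch := chosen_in_ChS hin hT hc
    rw [ChS, Finset.mem_filter] at hch
    have hψv : ψ (rv hn hk φ ψ i) ∈ allowed hk φ ψ (Rset hn hk φ ψ i) (rv hn hk φ ψ i) :=
      valid_mem_allowed hval (rv_not_mem hin)
    obtain ⟨u, hu, hnf⟩ := hch.2 _ hψv
    obtain ⟨hune, hunR, hcard2, hfcard⟩ := hnf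
    -- card of allowed at step i+1
    have hstep : allowed hk φ ψ (Rset hn hk φ ψ (i+1)) u =
        (allowed hk φ ψ (Rset hn hk φ ψ i) u).filter
          (fun y => ψ (rv hn hk φ ψ i) = cf hk φ (rv hn hk φ ψ i) u ∨
            y = ψ (rv hn hk φ ψ i) ∨ y = cf hk φ (rv hn hk φ ψ i) u) := by
      rw [Rset_succ]; exact allowed_insert
    have hA1 : (allowed hk φ ψ (Rset hn hk φ ψ (i+1)) u).card ≤ 1 := by
      rw [hstep]
      exact hfcard
    have hu1 : u ∉ Rset hn hk φ ψ (i + 1) := by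
      rw [Rset_succ, Finset.mem_insert]
      rintro (he | hmem)
      · exact hune he
      · rw [Finset.mem_compl] at hu; exact hu hmem
    have humem : u ∈ Rset hn hk φ ψ n := by rw [Rset_univ]; exact Finset.mem_univ u
    obtain ⟨j, hj1, hj2, hj3⟩ := exists_rv_between (by omega) humem hu1
    refine ⟨j, ?_, by omega, by rw [hj3]; exact hcard2, by rw [hj3]; exact hA1⟩
    rw [Finset.mem_filter, Finset.mem_range]
    refine ⟨hj2, ?_⟩
    unfold stF aC
    rw [hj3]
    calc (allowed hk φ ψ (Rset hn hk φ ψ j) u).card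
        ≤ (allowed hk φ ψ (Rset hn hk φ ψ (i+1)) u).card :=
          Finset.card_le_card (allowed_anti (Rset_mono (by omega)) u)
      _ ≤ 1 := hA1
  choose σ hσ1 hσ2 hσ3 hσ4 using key
  apply Finset.card_le_card_of_injOn (fun i => if h : i ∈ C then σ i h else 0)
  · intro i hi
    simp only [Finset.mem_coe] at hi ⊢
    rw [dif_pos hi]
    exact hσ1 i hi
  · intro i1 h1 i2 h2 he
    rw [Finset.mem_coe] at h1 h2
    have h1' : i1 ∈ C := h1
    have h2' : i2 ∈ C := h2
    simp only [dif_pos h1', dif_pos h2'] at he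
    by_contra hne
    rcases lt_or_gt_of_ne hne with hl | hl
    · have c2 := hσ3 i2 h2'
      have c1 := hσ4 i1 h1'
      rw [← he] at c2
      have : (allowed hk φ ψ (Rset hn hk φ ψ i2) (rv hn hk φ ψ (σ i1 h1'))).card ≤
          (allowed hk φ ψ (Rset hn hk φ ψ (i1+1)) (rv hn hk φ ψ (σ i1 h1'))).card :=
        Finset.card_le_card (allowed_anti (Rset_mono (by omega)) _)
      omega
    · have c2 := hσ3 i1 h1'
      have c1 := hσ4 i2 h2'
      rw [he] at c2
      have : (allowed hk φ ψ (Rset hn hk φ ψ i1) (rv hn hk φ ψ (σ i2 h2'))).card ≤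
          (allowed hk φ ψ (Rset hn hk φ ψ (i2+1)) (rv hn hk φ ψ (σ i2 h2'))).card :=
        Finset.card_le_card (allowed_anti (Rset_mono (by omega)) _)
      omega

/-- The structural lemma: at a fully-free two-colored state, the unrevealed set is
covered by at most two color classes, each of which induces an `F`-structure and
hence has size `< m`. -/
lemma free0_bound
    (hGal : ∀ a b c : Fin n, a ≠ b → b ≠ c → a ≠ c →
      (cf hk φ a b = cf hk φ b c ∨ cf hk φ b c = cf hk φ a c ∨
        cf hk φ a b = cf hk φ a c))
    {m : ℕ} (hm : 1 ≤ m)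
    (hno : ∀ S : Finset (Fin n), S.card = m → ¬ InFOn φ S)
    {R : Finset (Fin n)}
    (hc2 : ∀ v ∈ (Rᶜ : Finset (Fin n)), (allowed hk φ ψ R v).card = 2)
    (hfree : ∀ v ∈ (Rᶜ : Finset (Fin n)), ∃ x ∈ allowed hk φ ψ R v,
      ∀ u ∈ (Rᶜ : Finset (Fin n)), ¬ NFa hk φ ψ R v x u) :
    (Rᶜ : Finset (Fin n)).card + 2 ≤ 2 * m := by
  classical
  set U : Finset (Fin n) := Rᶜ with hU
  -- choose the harmless color at each unrevealed vertex
  have hfree' : ∀ v : Fin n, ∃ x : Fin k, v ∈ U →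
      (x ∈ allowed hk φ ψ R v ∧ ∀ u ∈ U, ¬ NFa hk φ ψ R v x u) := by
    intro v
    by_cases hv : v ∈ U
    · obtain ⟨x, hx1, hx2⟩ := hfree v hv
      exact ⟨x, fun _ => ⟨hx1, hx2⟩⟩
    · exact ⟨⟨0, hk⟩, fun h => absurd h hv⟩
  choose x hx using hfree'
  have hxmem : ∀ v ∈ U, x v ∈ allowed hk φ ψ R v := fun v hv => (hx v hv).1
  -- the pairwise relation
  have pairRel : ∀ v ∈ U, ∀ u ∈ U, u ≠ v →
      (cf hk φ v u = x v ∨ allowed hk φ ψ R u = {x v, cf hk φ v u}) := by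
    intro v hv u hu hne
    have hnf := (hx v hv).2 u hu
    unfold NFa at hnf
    push_neg at hnf
    have hcu := hc2 u hu
    have huR : u ∉ R := by rwa [hU, Finset.mem_compl] at hu
    have h2f := hnf hne huR (by omega)
    -- the filtered set has ≥ 2 elements, hence equals the allowed set
    have hsub : (allowed hk φ ψ R u).filter
        (fun y => x v = cf hk φ v u ∨ y = x v ∨ y = cf hk φ v u) ⊆
        allowed hk φ ψ R u := Finset.filter_subset _ _
    have heq : (allowed hk φ ψ R u).filter
        (fun y => x v = cf hk φ v u ∨ y = x v ∨ y = cf hk φ v u) =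
        allowed hk φ ψ R u := Finset.eq_of_subset_of_card_le hsub (by omega)
    have hall : ∀ y ∈ allowed hk φ ψ R u,
        x v = cf hk φ v u ∨ y = x v ∨ y = cf hk φ v u := by
      intro y hy
      have hy' : y ∈ (allowed hk φ ψ R u).filter
          (fun y => x v = cf hk φ v u ∨ y = x v ∨ y = cf hk φ v u) := by
        rw [heq]; exact hy
      exact (Finset.mem_filter.mp hy').2
    by_cases hce : cf hk φ v u = x v
    · exact Or.inl hce
    · right
      apply Finset.eq_of_subset_of_card_le
      · intro y hy
        have := hall y hy
        simp only [Finset.mem_insert, Finset.mem_singleton]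
        rcases this with h | h | h
        · exact absurd h.symm hce
        · exact Or.inl h
        · exact Or.inr h
      · rw [Finset.card_insert_of_notMem (by simpa using (Ne.symm hce)), Finset.card_singleton]
        omega
  -- the other allowed color
  set z : Fin n → Fin k := fun u =>
    if h : ((allowed hk φ ψ R u).erase (x u)).Nonempty then
      ((allowed hk φ ψ R u).erase (x u)).min' h else ⟨0, hk⟩ with hz
  have hzprop : ∀ u ∈ U, z u ≠ x u ∧ z u ∈ allowed hk φ ψ R u ∧
      allowed hk φ ψ R u = {x u, z u} := by
    intro u hu
    have hcu := hc2 u hu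
    have hermem : x u ∈ allowed hk φ ψ R u := hxmem u hu
    have hcard : ((allowed hk φ ψ R u).erase (x u)).card = 1 := by
      rw [Finset.card_erase_of_mem hermem, hcu]
    have hne : ((allowed hk φ ψ R u).erase (x u)).Nonempty := by
      rw [← Finset.card_pos, hcard]; omega
    have hzmem : z u ∈ (allowed hk φ ψ R u).erase (x u) := by
      rw [hz]; simp only [dif_pos hne]; exact Finset.min'_mem _ _
    rw [Finset.mem_erase] at hzmem
    refine ⟨hzmem.1, hzmem.2, ?_⟩
    apply Finset.eq_of_subset_of_card_le
    · -- allowed ⊆ {x u, z u}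
      have h1 : (allowed hk φ ψ R u).erase (x u) = {z u} := by
        rcases Finset.card_eq_one.mp hcard with ⟨a, ha⟩
        have : z u ∈ ({a} : Finset (Fin k)) := by
          rw [← ha, Finset.mem_erase]; exact ⟨hzmem.1, hzmem.2⟩
        rw [Finset.mem_singleton] at this
        rw [ha, this]
      intro y hy
      by_cases hyx : y = x u
      · simp [hyx]
      · have : y ∈ (allowed hk φ ψ R u).erase (x u) := Finset.mem_erase.mpr ⟨hyx, hy⟩
        rw [h1, Finset.mem_singleton] at this
        simp [this]
    · rw [hcu]
      exact (Finset.card_insert_le _ _).trans (by simp)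
  -- at most two color classes
  have himg : (U.image x).card ≤ 2 := by
    by_contra hgt
    push_neg at hgt
    obtain ⟨ξ1, ξ2, ξ3, ha, hb, hc, h12, h13, h23⟩ := Finset.two_lt_card_iff.mp hgt
    obtain ⟨u1, hu1, hxu1⟩ := Finset.mem_image.mp ha
    obtain ⟨u2, hu2, hxu2⟩ := Finset.mem_image.mp hb
    obtain ⟨u3, hu3, hxu3⟩ := Finset.mem_image.mp hc
    have hne12 : u1 ≠ u2 := fun he => h12 (by rw [← hxu1, he, hxu2])
    have hne13 : u1 ≠ u3 := fun he => h13 (by rw [← hxu1, he, hxu3])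
    have hne23 : u2 ≠ u3 := fun he => h23 (by rw [← hxu2, he, hxu3])
    -- winner analysis
    have wA : ∀ u ∈ U, ∀ v ∈ U, u ≠ v → x u ≠ x v →
        (cf hk φ u v = x u ∨ cf hk φ u v = x v) := by
      intro u hu v hv huv hxx
      rcases pairRel u hu v hv (Ne.symm huv) with h | h
      · exact Or.inl h
      · have hxv : x v ∈ allowed hk φ ψ R v := hxmem v hv
        rw [h, Finset.mem_insert, Finset.mem_singleton] at hxv
        rcases hxv with h' | h'
        · exact absurd h' (Ne.symm hxx)
        · exact Or.inr h'.symm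
    have wSet : ∀ u ∈ U, ∀ v ∈ U, u ≠ v → x u ≠ x v → cf hk φ u v = x u →
        allowed hk φ ψ R u = {x v, cf hk φ u v} := by
      intro u hu v hv huv hxx hwin
      rcases pairRel v hv u hu huv with h | h
      · rw [cf_comm hk φ v u, hwin] at h
        exact absurd h hxx
      · rw [cf_comm hk φ v u] at h
        exact h
    have excl : ∀ u ∈ U, ∀ v ∈ U, ∀ w ∈ U, u ≠ v → u ≠ w → x u ≠ x v → x u ≠ x w →
        x v ≠ x w → cf hk φ u v = x u → cf hk φ u w = x u → False := by
      intro u hu v hv w hw huv huw hxv hxw hvw hwin1 hwin2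
      have e1 := wSet u hu v hv huv hxv hwin1
      have e2 := wSet u hu w hw huw hxw hwin2
      rw [hwin1] at e1
      rw [hwin2] at e2
      rw [e1] at e2
      have hmm : x v ∈ ({x w, x u} : Finset (Fin k)) := by
        rw [← e2]
        exact Finset.mem_insert_self _ _
      rw [Finset.mem_insert, Finset.mem_singleton] at hmm
      rcases hmm with h | h
      · exact hvw h
      · exact hxv h.symm
    have hx12 : x u1 ≠ x u2 := by rw [hxu1, hxu2]; exact h12
    have hx13 : x u1 ≠ x u3 := by rw [hxu1, hxu3]; exact h13
    have hx23 : x u2 ≠ x u3 := by rw [hxu2, hxu3]; exact h23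
    have w12 := wA u1 hu1 u2 hu2 hne12 hx12
    have w23 := wA u2 hu2 u3 hu3 hne23 hx23
    have w13 := wA u1 hu1 u3 hu3 hne13 hx13
    have gal := hGal u1 u2 u3 hne12 hne23 hne13
    have comm12 : cf hk φ u2 u1 = cf hk φ u1 u2 := cf_comm hk φ u2 u1
    have comm23 : cf hk φ u3 u2 = cf hk φ u2 u3 := cf_comm hk φ u3 u2
    have comm13 : cf hk φ u3 u1 = cf hk φ u1 u3 := cf_comm hk φ u3 u1
    rcases w12 with e12 | e12 <;> rcases w23 with e23 | e23 <;> rcases w13 with e13 | e13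
    · exact excl u1 hu1 u2 hu2 u3 hu3 hne12 hne13 hx12 hx13 hx23 e12 e13
    · rw [e12, e23, e13] at gal
      rcases gal with h | h | h
      · exact hx12 h
      · exact hx23 h
      · exact hx13 h
    · exact excl u1 hu1 u2 hu2 u3 hu3 hne12 hne13 hx12 hx13 hx23 e12 e13
    · exact excl u3 hu3 u2 hu2 u1 hu1 hne23.symm hne13.symm hx23.symm hx13.symm
        hx12.symm (by rw [comm23]; exact e23) (by rw [comm13]; exact e13)
    · exact excl u2 hu2 u1 hu1 u3 hu3 hne12.symm hne23 hx12.symm hx23 hx13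
        (by rw [comm12]; exact e12) e23
    · exact excl u2 hu2 u1 hu1 u3 hu3 hne12.symm hne23 hx12.symm hx23 hx13
        (by rw [comm12]; exact e12) e23
    · rw [e12, e23, e13] at gal
      rcases gal with h | h | h
      · exact hx23 h
      · exact hx13 h.symm
      · exact hx12 h.symm
    · exact excl u3 hu3 u2 hu2 u1 hu1 hne23.symm hne13.symm hx23.symm hx13.symm
        hx12.symm (by rw [comm23]; exact e23) (by rw [comm13]; exact e13)
  -- each color class is small
  have hfib : ∀ ξ : Fin k, (U.filter (fun u => x u = ξ)).card < m := by
    intro ξ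
    by_contra hge
    push_neg at hge
    obtain ⟨S, hSsub, hScard⟩ :=
      Finset.exists_subset_card_eq hge
    apply hno S hScard
    refine ⟨ξ, fun v => z v.1, ?_, ?_⟩
    · intro v
      have hv := hSsub v.2
      rw [Finset.mem_filter] at hv
      have := (hzprop v.1 hv.1).1
      rw [hv.2] at this
      exact this
    · intro a b hab
      have haf := hSsub a.2
      have hbf := hSsub b.2
      rw [Finset.mem_filter] at haf hbf
      have haU := haf.1
      have hbU := hbf.1
      have hxa : x a.1 = ξ := haf.2
      have hxb : x b.1 = ξ := hbf.2
      have hcf : cf hk φ a.1 b.1 = φ (edgeOf a.1 b.1 hab) := cf_eq hk φ hab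
      by_cases hcξ : φ (edgeOf a.1 b.1 hab) = ξ
      · exact ⟨fun _ => hcξ, fun _ => Or.inr hcξ⟩
      · -- both relations land in the set case
        have r1 : allowed hk φ ψ R b.1 = {ξ, φ (edgeOf a.1 b.1 hab)} := by
          rcases pairRel a.1 haU b.1 hbU (fun he => hab he.symm) with h | h
          · rw [hcf, hxa] at h; exact absurd h hcξ
          · rw [hcf, hxa] at h; exact h
        have r2 : allowed hk φ ψ R a.1 = {ξ, φ (edgeOf a.1 b.1 hab)} := by
          rcases pairRel b.1 hbU a.1 haU hab with h | h
          · rw [cf_comm, hcf, hxb] at h; exact absurd h hcξ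
          · rw [cf_comm, hcf, hxb] at h; exact h
        have hza : z a.1 = φ (edgeOf a.1 b.1 hab) := by
          have hmem := (hzprop a.1 haU).2.1
          rw [r2, Finset.mem_insert, Finset.mem_singleton] at hmem
          rcases hmem with h | h
          · exfalso; exact (hzprop a.1 haU).1 (by rw [h, hxa])
          · exact h
        have hzb : z b.1 = φ (edgeOf a.1 b.1 hab) := by
          have hmem := (hzprop b.1 hbU).2.1
          rw [r1, Finset.mem_insert, Finset.mem_singleton] at hmem
          rcases hmem with h | h
          · exfalso; exact (hzprop b.1 hbU).1 (by rw [h, hxb])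
          · exact h
        refine ⟨fun hne => absurd (hza.trans hzb.symm) hne, fun _ => Or.inl hza.symm⟩
  -- sum over fibers
  have hcover : ∀ u ∈ U, x u ∈ U.image x := fun u hu => Finset.mem_image_of_mem x hu
  have hsum := Finset.card_eq_sum_card_fiberwise hcover
  have hbound : U.card ≤ (U.image x).card * (m - 1) := by
    rw [hsum]
    calc ∑ ξ ∈ U.image x, (U.filter (fun u => x u = ξ)).card
        ≤ ∑ _ξ ∈ U.image x, (m - 1) := by
          apply Finset.sum_le_sum
          intro ξ _
          have := hfib ξ
          omega
      _ = (U.image x).card * (m - 1) := by rw [Finset.sum_const, smul_eq_mul]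
  have : U.card ≤ 2 * (m - 1) := by
    calc U.card ≤ (U.image x).card * (m-1) := hbound
      _ ≤ 2 * (m-1) := Nat.mul_le_mul_right _ himg
  omega

/-- Global bound on the number of two-type steps. -/
lemma countT_le (hval : Valid hk φ ψ)
    (hGal : ∀ a b c : Fin n, a ≠ b → b ≠ c → a ≠ c →
      (cf hk φ a b = cf hk φ b c ∨ cf hk φ b c = cf hk φ a c ∨
        cf hk φ a b = cf hk φ a c))
    {m : ℕ} (hm : 1 ≤ m)
    (hno : ∀ S : Finset (Fin n), S.card = m → ¬ InFOn φ S) :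
    2 * countT hn hk φ ψ n + 2 ≤ n + 2 * m := by
  classical
  set rge := Finset.range n with hrge
  -- partition of steps by type
  have htri : ∀ i, ¬ stF hn hk φ ψ i → ¬ stB hn hk φ ψ i → stT hn hk φ ψ i := by
    intro i h1 h2
    unfold stF at h1; unfold stB at h2; unfold stT; omega
  have hsplit1 : (rge.filter (stF hn hk φ ψ)).card +
      (rge.filter (fun i => ¬ stF hn hk φ ψ i)).card = n := by
    rw [Finset.card_filter_add_card_filter_not, hrge, Finset.card_range]
  have hsplit2 : ((rge.filter (fun i => ¬ stF hn hk φ ψ i)).filter (stB hn hk φ ψ)).card +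
      ((rge.filter (fun i => ¬ stF hn hk φ ψ i)).filter
        (fun i => ¬ stB hn hk φ ψ i)).card =
      (rge.filter (fun i => ¬ stF hn hk φ ψ i)).card := by
    rw [Finset.card_filter_add_card_filter_not]
  have hTeq : (rge.filter (fun i => ¬ stF hn hk φ ψ i)).filter
      (fun i => ¬ stB hn hk φ ψ i) = rge.filter (stT hn hk φ ψ) := by
    ext i
    simp only [Finset.mem_filter]
    constructor
    · rintro ⟨⟨hr, h1⟩, h2⟩
      exact ⟨hr, htri i h1 h2⟩
    · rintro ⟨hr, hT⟩
      have h1 : ¬ stF hn hk φ ψ i := by unfold stF; unfold stT at hT; omega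
      have h2 : ¬ stB hn hk φ ψ i := by unfold stB; unfold stT at hT; omega
      exact ⟨⟨hr, h1⟩, h2⟩
  -- split two-steps into charged and uncharged
  have hsplit3 : ((rge.filter (stT hn hk φ ψ)).filter (chg hn hk φ ψ)).card +
      ((rge.filter (stT hn hk φ ψ)).filter (fun i => ¬ chg hn hk φ ψ i)).card =
      (rge.filter (stT hn hk φ ψ)).card := by
    rw [Finset.card_filter_add_card_filter_not]
  have hchg : (rge.filter (stT hn hk φ ψ)).filter (chg hn hk φ ψ) =
      rge.filter (fun i => stT hn hk φ ψ i ∧ chg hn hk φ ψ i) := by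
    rw [Finset.filter_filter]
  have hChLe : ((rge.filter (stT hn hk φ ψ)).filter (chg hn hk φ ψ)).card ≤
      (rge.filter (stF hn hk φ ψ)).card := by
    rw [hchg]
    exact charged_le_forced hval
  -- uncharged two-steps are late
  have hFrLe : ((rge.filter (stT hn hk φ ψ)).filter
      (fun i => ¬ chg hn hk φ ψ i)).card ≤ 2 * m - 2 := by
    have hsub : (rge.filter (stT hn hk φ ψ)).filter (fun i => ¬ chg hn hk φ ψ i) ⊆
        Finset.Ico (n + 2 - 2 * m) n := by
      intro i hi
      simp only [Finset.mem_filter, hrge, Finset.mem_range] at hi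
      obtain ⟨⟨hin, hT⟩, hc⟩ := hi
      have hb := free0_bound hGal hm hno (two_all hin hT) (free_struct hin hT hc)
      have hcc : ((Rset hn hk φ ψ i)ᶜ : Finset (Fin n)).card = n - i := by
        rw [Finset.card_compl, Rset_card i (by omega), Fintype.card_fin]
      rw [hcc] at hb
      rw [Finset.mem_Ico]
      omega
    have := Finset.card_le_card hsub
    rw [Nat.card_Ico] at this
    omega
  have hTdef : countT hn hk φ ψ n = (rge.filter (stT hn hk φ ψ)).card := rfl
  have hTcard := congrArg Finset.card hTeq
  omega

section Encoding

variable (hn : 0 < n) (hk : 0 < k) (φ : Edge n → Fin k)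

/-- The bit recorded at a two-type step. -/
noncomputable def bitP (ψ : Fin n → Fin k) (i : ℕ) : Prop :=
  (allowed hk φ ψ (Rset hn hk φ ψ i) (rv hn hk φ ψ i)).max =
    (ψ (rv hn hk φ ψ i) : WithBot (Fin k))

/-- The bit string of a run (padded into `Fin F`). -/
noncomputable def bits (ψ : Fin n → Fin k) (F : ℕ) : Fin F → Prop :=
  fun j => if h : ∃ i, i < n ∧ stT hn hk φ ψ i ∧ countT hn hk φ ψ i = (j : ℕ) then
    bitP hn hk φ ψ h.choose else False

/-- The last vertex revealed at a `B∅`-type step together with its value. -/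
noncomputable def ustar (ψ : Fin n → Fin k) : Option (Fin n × Fin k) :=
  if h : ∃ i, i < n ∧ stB hn hk φ ψ i then
    some (rv hn hk φ ψ (Nat.findGreatest (fun i => i < n ∧ stB hn hk φ ψ i) n),
      ψ (rv hn hk φ ψ (Nat.findGreatest (fun i => i < n ∧ stB hn hk φ ψ i) n)))
  else none

end Encoding

lemma bits_eval {F : ℕ} {i : ℕ} (hi : i < n) (hT : stT hn hk φ ψ i)
    {j : Fin F} (hj : countT hn hk φ ψ i = (j : ℕ)) :
    bits hn hk φ ψ F j = bitP hn hk φ ψ i := by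
  unfold bits
  have hex : ∃ i', i' < n ∧ stT hn hk φ ψ i' ∧ countT hn hk φ ψ i' = (j : ℕ) :=
    ⟨i, hi, hT, hj⟩
  rw [dif_pos hex]
  obtain ⟨h1, h2, h3⟩ := hex.choose_spec
  have : hex.choose = i := countT_inj h2 hT (by rw [h3, hj])
  rw [this]

/-- The decisive injectivity lemma: the code determines the valid extension. -/
lemma enc_inj {F : ℕ}
    (hval₁ : Valid hk φ ψ₁) (hval₂ : Valid hk φ ψ₂)
    (hT₁ : countT hn hk φ ψ₁ n ≤ F)
    (hu : ustar hn hk φ ψ₁ = ustar hn hk φ ψ₂)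
    (hb : bits hn hk φ ψ₁ F = bits hn hk φ ψ₂ F) :
    ψ₁ = ψ₂ := by
  classical
  have KEY : ∀ i, i ≤ n → ∀ j, j ≤ i → (Rset hn hk φ ψ₁ j = Rset hn hk φ ψ₂ j ∧
      ∀ w ∈ Rset hn hk φ ψ₁ j, ψ₁ w = ψ₂ w) := by
    intro i
    induction i with
    | zero =>
      intro _ j hj
      have : j = 0 := by omega
      subst this
      exact ⟨rfl, by simp [Rset]⟩
    | succ i ih =>
      intro hin j hj
      rcases Nat.lt_or_ge j (i+1) with hlt | hge
      · exact ih (by omega) j (by omega)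
      have hji : j = i + 1 := by omega
      subst hji
      have hi : i < n := by omega
      obtain ⟨hReq, hVeq⟩ := ih (by omega) i le_rfl
      -- states and choices coincide at step i
      have hrv : rv hn hk φ ψ₁ i = rv hn hk φ ψ₂ i := by
        unfold rv
        rw [← hReq]
        exact rule_congr hn hVeq
      have hAeq : ∀ v, allowed hk φ ψ₁ (Rset hn hk φ ψ₁ i) v =
          allowed hk φ ψ₂ (Rset hn hk φ ψ₂ i) v := by
        intro v
        rw [← hReq]
        exact allowed_congr hVeq v
      -- step types coincide at all steps ≤ i
      have hstep : ∀ jj, jj ≤ i → aC hn hk φ ψ₁ jj = aC hn hk φ ψ₂ jj := by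
        intro jj hjj
        obtain ⟨hReq', hVeq'⟩ := ih (by omega) jj hjj
        have hrv' : rv hn hk φ ψ₁ jj = rv hn hk φ ψ₂ jj := by
          unfold rv
          rw [← hReq']
          exact rule_congr hn hVeq'
        unfold aC
        rw [← hReq', ← hrv', allowed_congr hVeq']
      -- need: value equality at the newly revealed vertex
      have hv1 : ψ₁ (rv hn hk φ ψ₁ i) ∈
          allowed hk φ ψ₁ (Rset hn hk φ ψ₁ i) (rv hn hk φ ψ₁ i) :=
        valid_mem_allowed hval₁ (rv_not_mem hi)
      have hv2 : ψ₂ (rv hn hk φ ψ₁ i) ∈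
          allowed hk φ ψ₁ (Rset hn hk φ ψ₁ i) (rv hn hk φ ψ₁ i) := by
        rw [hAeq, hrv]
        exact valid_mem_allowed hval₂ (rv_not_mem hi)
      have hvals : ψ₁ (rv hn hk φ ψ₁ i) = ψ₂ (rv hn hk φ ψ₁ i) := by
        rcases Nat.lt_or_ge (aC hn hk φ ψ₁ i) 2 with hc | hc
        · -- forced step
          have hle : (allowed hk φ ψ₁ (Rset hn hk φ ψ₁ i) (rv hn hk φ ψ₁ i)).card ≤ 1 := by
            unfold aC at hc; omega
          exact Finset.card_le_one.mp hle _ hv1 _ hv2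
        rcases Nat.lt_or_ge (aC hn hk φ ψ₁ i) 3 with hc3 | hc3
        · -- two-type step: use bits
          have hT : stT hn hk φ ψ₁ i := by unfold stT; omega
          have hT' : stT hn hk φ ψ₂ i := by
            unfold stT; rw [← hstep i le_rfl]; omega
          have hcnt : countT hn hk φ ψ₂ i = countT hn hk φ ψ₁ i := by
            unfold countT
            congr 1
            apply Finset.filter_congr
            intro jj hjj
            rw [Finset.mem_range] at hjj
            unfold stT
            rw [hstep jj (by omega)]
          have hjF : countT hn hk φ ψ₁ i < F := by
            have h1 : countT hn hk φ ψ₁ (i+1) = countT hn hk φ ψ₁ i + 1 :=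
              countT_succ_of hT
            have h2 : countT hn hk φ ψ₁ (i+1) ≤ countT hn hk φ ψ₁ n :=
              countT_mono (by omega)
            omega
          have e1 : bits hn hk φ ψ₁ F ⟨countT hn hk φ ψ₁ i, hjF⟩ = bitP hn hk φ ψ₁ i :=
            bits_eval hi hT rfl
          have e2 : bits hn hk φ ψ₂ F ⟨countT hn hk φ ψ₁ i, hjF⟩ = bitP hn hk φ ψ₂ i :=
            bits_eval hi hT' (by rw [hcnt])
          have hbit : bitP hn hk φ ψ₁ i ↔ bitP hn hk φ ψ₂ i := by
            rw [← e1, ← e2, hb]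
          unfold bitP at hbit
          rw [← hrv] at hbit
          rw [← hAeq] at hbit
          -- both values lie in the same 2-element set
          by_cases hmax : (allowed hk φ ψ₁ (Rset hn hk φ ψ₁ i) (rv hn hk φ ψ₁ i)).max =
              (ψ₁ (rv hn hk φ ψ₁ i) : WithBot (Fin k))
          · have h2 := hbit.mp hmax
            rw [hmax] at h2
            exact WithBot.coe_inj.mp h2
          · have hmax2 : ¬ (allowed hk φ ψ₁ (Rset hn hk φ ψ₁ i) (rv hn hk φ ψ₁ i)).max =
                (ψ₂ (rv hn hk φ ψ₁ i) : WithBot (Fin k)) := fun h => hmax (hbit.mpr h)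
            have hA2 : (allowed hk φ ψ₁ (Rset hn hk φ ψ₁ i) (rv hn hk φ ψ₁ i)).card = 2 := by
              unfold aC at hc hc3; omega
            have hne : (allowed hk φ ψ₁ (Rset hn hk φ ψ₁ i) (rv hn hk φ ψ₁ i)).Nonempty := by
              rw [← Finset.card_pos, hA2]; omega
            have hcmax : ((allowed hk φ ψ₁ (Rset hn hk φ ψ₁ i) (rv hn hk φ ψ₁ i)).max' hne :
                WithBot (Fin k)) =
                (allowed hk φ ψ₁ (Rset hn hk φ ψ₁ i) (rv hn hk φ ψ₁ i)).max :=
              Finset.coe_max' hne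
            have hb1 : ψ₁ (rv hn hk φ ψ₁ i) ≠
                (allowed hk φ ψ₁ (Rset hn hk φ ψ₁ i) (rv hn hk φ ψ₁ i)).max' hne := by
              intro he
              apply hmax
              rw [he, hcmax]
            have hb2 : ψ₂ (rv hn hk φ ψ₁ i) ≠
                (allowed hk φ ψ₁ (Rset hn hk φ ψ₁ i) (rv hn hk φ ψ₁ i)).max' hne := by
              intro he
              apply hmax2
              rw [he, hcmax]
            have hbm := Finset.max'_mem _ hne
            have hcard1 : ((allowed hk φ ψ₁ (Rset hn hk φ ψ₁ i) (rv hn hk φ ψ₁ i)).erase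
                ((allowed hk φ ψ₁ (Rset hn hk φ ψ₁ i) (rv hn hk φ ψ₁ i)).max' hne)).card = 1 := by
              rw [Finset.card_erase_of_mem hbm, hA2]
            obtain ⟨c, hcs⟩ := Finset.card_eq_one.mp hcard1
            have m1 : ψ₁ (rv hn hk φ ψ₁ i) ∈ _ := Finset.mem_erase.mpr ⟨hb1, hv1⟩
            have m2 : ψ₂ (rv hn hk φ ψ₁ i) ∈ _ := Finset.mem_erase.mpr ⟨hb2, hv2⟩
            rw [hcs, Finset.mem_singleton] at m1 m2
            rw [m1, m2]
        · -- B∅-type step: use ustar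
          have hB : stB hn hk φ ψ₁ i := by unfold stB; omega
          have hB' : stB hn hk φ ψ₂ i := by
            unfold stB; rw [← hstep i le_rfl]; omega
          have hex1 : ∃ i', i' < n ∧ stB hn hk φ ψ₁ i' := ⟨i, hi, hB⟩
          have hex2 : ∃ i', i' < n ∧ stB hn hk φ ψ₂ i' := ⟨i, hi, hB'⟩
          set J₁ := Nat.findGreatest (fun i' => i' < n ∧ stB hn hk φ ψ₁ i') n with hJ1
          set J₂ := Nat.findGreatest (fun i' => i' < n ∧ stB hn hk φ ψ₂ i') n with hJ2
          have hu1 : ustar hn hk φ ψ₁ = some (rv hn hk φ ψ₁ J₁, ψ₁ (rv hn hk φ ψ₁ J₁)) := by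
            unfold ustar; rw [dif_pos hex1]
          have hu2 : ustar hn hk φ ψ₂ = some (rv hn hk φ ψ₂ J₂, ψ₂ (rv hn hk φ ψ₂ J₂)) := by
            unfold ustar; rw [dif_pos hex2]
          rw [hu1, hu2] at hu
          have hupair := Option.some_inj.mp hu
          have huv : rv hn hk φ ψ₁ J₁ = rv hn hk φ ψ₂ J₂ := congrArg Prod.fst hupair
          have huval : ψ₁ (rv hn hk φ ψ₁ J₁) = ψ₂ (rv hn hk φ ψ₂ J₂) :=
            congrArg Prod.snd hupair
          have hJ1spec : J₁ < n ∧ stB hn hk φ ψ₁ J₁ :=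
            Nat.findGreatest_spec (P := fun i' => i' < n ∧ stB hn hk φ ψ₁ i')
              (le_of_lt hi) ⟨hi, hB⟩
          have hJ2spec : J₂ < n ∧ stB hn hk φ ψ₂ J₂ :=
            Nat.findGreatest_spec (P := fun i' => i' < n ∧ stB hn hk φ ψ₂ i')
              (le_of_lt hi) ⟨hi, hB'⟩
          by_cases hvu : rv hn hk φ ψ₁ i = rv hn hk φ ψ₁ J₁
          · rw [hvu, huval, ← huv]
          · have hiJ1 : i ≤ J₁ := by
              by_contra hgt
              push_neg at hgt
              exact (Nat.findGreatest_is_greatest hgt (le_of_lt hi)) ⟨hi, hB⟩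
            have hiJ1' : i < J₁ := by
              rcases Nat.lt_or_ge i J₁ with h | h
              · exact h
              · exfalso
                apply hvu
                have : i = J₁ := by omega
                rw [this]
            have hmatch1 : ψ₁ (rv hn hk φ ψ₁ i) = cf hk φ (rv hn hk φ ψ₁ i) (rv hn hk φ ψ₁ J₁) := by
              have hhigh : 3 ≤ (allowed hk φ ψ₁ (Rset hn hk φ ψ₁ J₁) (rv hn hk φ ψ₁ J₁)).card :=
                hJ1spec.2
              exact allowed_high_card hhigh _ (rv_mem hiJ1')
            have hvu2 : rv hn hk φ ψ₂ i ≠ rv hn hk φ ψ₂ J₂ := by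
              rw [← hrv, ← huv]
              exact hvu
            have hiJ2 : i ≤ J₂ := by
              by_contra hgt
              push_neg at hgt
              exact (Nat.findGreatest_is_greatest hgt (le_of_lt hi)) ⟨hi, hB'⟩
            have hiJ2' : i < J₂ := by
              rcases Nat.lt_or_ge i J₂ with h | h
              · exact h
              · exfalso
                apply hvu2
                have : i = J₂ := by omega
                rw [this]
            have hmatch2 : ψ₂ (rv hn hk φ ψ₂ i) = cf hk φ (rv hn hk φ ψ₂ i) (rv hn hk φ ψ₂ J₂) := by
              have hhigh : 3 ≤ (allowed hk φ ψ₂ (Rset hn hk φ ψ₂ J₂) (rv hn hk φ ψ₂ J₂)).card :=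
                hJ2spec.2
              exact allowed_high_card hhigh _ (rv_mem hiJ2')
            rw [hmatch1, ← hrv] at *
            rw [hmatch2] at *
            rw [huv, hrv]
      refine ⟨?_, ?_⟩
      · rw [Rset_succ, Rset_succ, hReq, hrv]
      · intro w hw
        rw [Rset_succ, Finset.mem_insert] at hw
        rcases hw with rfl | hw
        · exact hvals
        · exact hVeq w hw
  funext w
  have hmem : w ∈ Rset hn hk φ ψ₁ n := by rw [Rset_univ]; exact Finset.mem_univ w
  exact (KEY n le_rfl n le_rfl).2 w hmem

/-- The star coloring induced at the new vertex by an extension. -/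
noncomputable def psiOf (φ' : Edge (n + 1) → Fin k) : Fin n → Fin k :=
  fun v => φ' (edgeOf v.castSucc (Fin.last n) (Fin.castSucc_lt_last v).ne)

lemma psiOf_valid {φ' : Edge (n + 1) → Fin k} (hG : IsGallai φ')
    (hE : Extends φ φ') : Valid hk φ (psiOf φ') := by
  intro a b hab
  have h1 : a.castSucc ≠ b.castSucc := fun he => hab (Fin.castSucc_injective n he)
  have h2 : b.castSucc ≠ Fin.last n := (Fin.castSucc_lt_last b).ne
  have h3 : a.castSucc ≠ Fin.last n := (Fin.castSucc_lt_last a).ne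
  have := hG a.castSucc b.castSucc (Fin.last n) h1 h2 h3
  have hE' := hE a b hab
  rw [hE'] at this
  unfold psiOf
  rw [cf_eq hk φ hab]
  have eb : edgeOf b.castSucc (Fin.last n) h2 =
      edgeOf b.castSucc (Fin.last n) (Fin.castSucc_lt_last b).ne := rfl
  have ea : edgeOf a.castSucc (Fin.last n) h3 =
      edgeOf a.castSucc (Fin.last n) (Fin.castSucc_lt_last a).ne := rfl
  rw [eb, ea] at this
  tauto

lemma psiOf_inj {φ'₁ φ'₂ : Edge (n + 1) → Fin k}
    (hE₁ : Extends φ φ'₁) (hE₂ : Extends φ φ'₂)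
    (h : psiOf φ'₁ = psiOf φ'₂) : φ'₁ = φ'₂ := by
  funext e
  obtain ⟨e, he⟩ := e
  induction e using Sym2.ind with
  | _ a b =>
    have hab : a ≠ b := fun hd => he (Sym2.mk_isDiag_iff.mpr hd)
    by_cases hal : a = Fin.last n
    · subst hal
      have hbl : b ≠ Fin.last n := fun hd => hab hd.symm
      set b' := b.castPred hbl with hb'
      have hbc : b'.castSucc = b := Fin.castSucc_castPred b hbl
      have hedge : (⟨s(Fin.last n, b), he⟩ : Edge (n+1)) =
          edgeOf b'.castSucc (Fin.last n) (Fin.castSucc_lt_last b').ne := by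
        apply Subtype.ext
        show s(Fin.last n, b) = s(b'.castSucc, Fin.last n)
        rw [hbc]
        exact Sym2.eq_swap
      rw [hedge]
      exact congrFun h b'
    · by_cases hbl : b = Fin.last n
      · subst hbl
        set a' := a.castPred hal with ha'
        have hac : a'.castSucc = a := Fin.castSucc_castPred a hal
        have hedge : (⟨s(a, Fin.last n), he⟩ : Edge (n+1)) =
            edgeOf a'.castSucc (Fin.last n) (Fin.castSucc_lt_last a').ne := by
          apply Subtype.ext
          show s(a, Fin.last n) = s(a'.castSucc, Fin.last n)
          rw [hac]
        rw [hedge]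
        exact congrFun h a'
      · set a' := a.castPred hal with ha'
        set b' := b.castPred hbl with hb'
        have hac : a'.castSucc = a := Fin.castSucc_castPred a hal
        have hbc : b'.castSucc = b := Fin.castSucc_castPred b hbl
        have hab' : a' ≠ b' := by
          intro hd
          apply hab
          rw [← hac, ← hbc, hd]
        have hedge : (⟨s(a, b), he⟩ : Edge (n+1)) =
            edgeOf a'.castSucc b'.castSucc
              (fun he' => hab' (Fin.castSucc_injective n he')) := by
          apply Subtype.ext
          show s(a, b) = s(a'.castSucc, b'.castSucc)
          rw [hac, hbc]
        rw [hedge, hE₁ a' b' hab', hE₂ a' b' hab']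

lemma pow_growth : ∀ j, 18 ≤ j → 8 * j + 7 < 2 ^ j := by
  intro j hj
  induction j with
  | zero => omega
  | succ j ih =>
    rcases Nat.lt_or_ge j 18 with h | h
    · have : j = 17 ∨ j + 1 = 18 := by omega
      have hj18 : j + 1 = 18 := by omega
      rw [hj18]
      norm_num
    · have hih := ih h
      have h8 : 8 ≤ 2 ^ j := by
        calc (8:ℕ) ≤ 8 * j + 7 := by omega
          _ ≤ 2 ^ j := le_of_lt hih
      have : 2 ^ (j + 1) = 2 ^ j + 2 ^ j := by ring
      omega

lemma n_le_pow (hn150 : 150 ≤ n) : n ≤ 2 ^ (n / 8) := by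
  have h18 : 18 ≤ n / 8 := by omega
  have := pow_growth (n / 8) h18
  omega

end NBF

/-- If a Gallai `k`-coloring of `K_n` (with `n ≥ 75t`) contains no set of `⌈n/3⌉`
vertices inducing a coloring in `F(⌈n/3⌉, k)`, then `w(φ,k) ≤ t·k²·2^{n−t}`.
Here `⌈n/3⌉ = (n + 2) / 3` in natural-number arithmetic. -/
theorem no_big_F_few_extensions (k t n : ℕ) (hk : 2 ≤ k) (ht : 2 ≤ t) (hn2 : 2 ≤ n)
    (hn : 75 * t ≤ n) (φ : Edge n → Fin k) (hφ : IsGallai φ)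
    (hno : ¬ ∃ S : Finset (Fin n), S.card = (n + 2) / 3 ∧ InFOn φ S) :
    extCount φ ≤ t * k ^ 2 * 2 ^ (n - t) := by
  classical
  have hk0 : 0 < k := by omega
  have hn150 : 150 ≤ n := by omega
  have hn0 : 0 < n := by omega
  set m : ℕ := (n + 2) / 3 with hmdef
  have hm3 : 3 * m ≤ n + 2 := by
    rw [hmdef]
    omega
  have hm3' : n < 3 * (m + 1) := by
    rw [hmdef]
    omega
  have hm1 : 1 ≤ m := by omega
  set FF : ℕ := (n + 2 * m) / 2 with hFFdef
  have hFF2 : 2 * FF ≤ n + 2 * m := by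
    rw [hFFdef]
    omega
  have hno' : ∀ S : Finset (Fin n), S.card = m → ¬ InFOn φ S := by
    intro S hS hIn
    exact hno ⟨S, hS, hIn⟩
  have hGalcf : ∀ a b c : Fin n, a ≠ b → b ≠ c → a ≠ c →
      (NBF.cf hk0 φ a b = NBF.cf hk0 φ b c ∨ NBF.cf hk0 φ b c = NBF.cf hk0 φ a c ∨
        NBF.cf hk0 φ a b = NBF.cf hk0 φ a c) := by
    intro a b c hab hbc hac
    rw [NBF.cf_eq hk0 φ hab, NBF.cf_eq hk0 φ hbc, NBF.cf_eq hk0 φ hac]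
    exact hφ a b c hab hbc hac
  -- the count of two-type steps is at most FF for every valid run
  have hTbound : ∀ ψ : Fin n → Fin k, NBF.Valid hk0 φ ψ →
      NBF.countT hn0 hk0 φ ψ n ≤ FF := by
    intro ψ hval
    have h := NBF.countT_le (hn := hn0) hval hGalcf hm1 hno'
    rw [hFFdef]
    rw [Nat.le_div_iff_mul_le (by omega)]
    omega
  -- the injection into the code type
  set Code := (Option (Fin n × Fin k)) × (Fin FF → Prop) with hCode
  have hinj : ∃ g : {φ' : Edge (n + 1) → Fin k // IsGallai φ' ∧ Extends φ φ'} → Code,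
      Function.Injective g := by
    refine ⟨fun p => (NBF.ustar hn0 hk0 φ (NBF.psiOf p.1),
      NBF.bits hn0 hk0 φ (NBF.psiOf p.1) FF), ?_⟩
    intro p q hpq
    rw [Prod.mk.injEq] at hpq
    have hval₁ : NBF.Valid hk0 φ (NBF.psiOf p.1) := NBF.psiOf_valid p.2.1 p.2.2
    have hval₂ : NBF.Valid hk0 φ (NBF.psiOf q.1) := NBF.psiOf_valid q.2.1 q.2.2
    have hpsi : NBF.psiOf p.1 = NBF.psiOf q.1 :=
      NBF.enc_inj hval₁ hval₂ (hTbound _ hval₁) hpq.1 hpq.2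
    exact Subtype.ext (NBF.psiOf_inj p.2.2 q.2.2 hpsi)
  obtain ⟨g, hg⟩ := hinj
  have hcard : extCount φ ≤ Nat.card Code := by
    unfold extCount
    exact Nat.card_le_card_of_injective g hg
  have hCodeCard : Nat.card Code = (n * k + 1) * 2 ^ FF := by
    rw [hCode, Nat.card_eq_fintype_card, Fintype.card_prod, Fintype.card_option,
      Fintype.card_prod, Fintype.card_fin, Fintype.card_fin, Fintype.card_fun,
      Fintype.card_prop, Fintype.card_fin]
  -- arithmetic
  have hq8 : 8 * (n / 8) ≤ n := by omega
  have ht75 : 75 * t ≤ n := hn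
  have hsum : t + FF + n / 8 ≤ n := by omega
  set G : ℕ := n - t - FF with hGdef
  have hG8 : n / 8 ≤ G := by omega
  have hGFF : G + FF = n - t := by omega
  have hnpow : n ≤ 2 ^ G := by
    calc n ≤ 2 ^ (n / 8) := NBF.n_le_pow hn150
      _ ≤ 2 ^ G := Nat.pow_le_pow_right (by omega) hG8
  have harith : (n * k + 1) * 2 ^ FF ≤ t * k ^ 2 * 2 ^ (n - t) := by
    have h1 : n * k + 1 ≤ 2 * n * k := by nlinarith
    have h2 : 2 * n * k ≤ 2 * 2 ^ G * k := by
      have := Nat.mul_le_mul_right k (Nat.mul_le_mul_left 2 hnpow)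
      linarith [this]
    have h3 : 2 * 2 ^ G * k ≤ t * k ^ 2 * 2 ^ G := by
      have hk2 : 2 * k ≤ t * k ^ 2 := by nlinarith
      calc 2 * 2 ^ G * k = (2 * k) * 2 ^ G := by ring
        _ ≤ (t * k ^ 2) * 2 ^ G := Nat.mul_le_mul_right _ hk2
    have h4 : n * k + 1 ≤ t * k ^ 2 * 2 ^ G := le_trans h1 (le_trans h2 h3)
    calc (n * k + 1) * 2 ^ FF ≤ (t * k ^ 2 * 2 ^ G) * 2 ^ FF :=
          Nat.mul_le_mul_right _ h4
      _ = t * k ^ 2 * (2 ^ G * 2 ^ FF) := by ring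
      _ = t * k ^ 2 * 2 ^ (n - t) := by rw [← pow_add, hGFF]
  calc extCount φ ≤ Nat.card Code := hcard
    _ = (n * k + 1) * 2 ^ FF := hCodeCard
    _ ≤ t * k ^ 2 * 2 ^ (n - t) := harith
end

section
/- For every n ≥ 1, every Gallai coloring of K_n contains a monochromatic spanning tree; that is, there exists a color c such that the spanning subgraph of K_n whose edge set consists of the edges of color c is connected. -/
/-- The spanning subgraph of `K_n` whose edge set consists of the edges of color `c`
under `φ`. -/
def colorGraph {n k : ℕ} (φ : Edge n → Fin k) (c : Fin k) : SimpleGraph (Fin n) where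
  Adj a b := ∃ h : a ≠ b, φ (edgeOf a b h) = c
  symm := by
    constructor
    rintro a b ⟨h, hc⟩
    refine ⟨h.symm, ?_⟩
    rwa [show edgeOf b a h.symm = edgeOf a b h from Subtype.ext Sym2.eq_swap]
  loopless := by constructor; rintro a ⟨h, -⟩; exact h rfl


lemma edgeOf_symm {n : ℕ} (a b : Fin n) (h : a ≠ b) :
    edgeOf b a h.symm = edgeOf a b h := Subtype.ext Sym2.eq_swap

/-- Restriction of a coloring of `K_{n+1}` to `K_n` via `Fin.castSucc`. -/
def resColor {n k : ℕ} (φ : Edge (n + 1) → Fin k) : Edge n → Fin k :=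
  fun e => φ ⟨e.1.map Fin.castSucc,
    fun hd => e.2 ((Sym2.isDiag_map (Fin.castSucc_injective n)).mp hd)⟩

lemma resColor_edgeOf {n k : ℕ} (φ : Edge (n + 1) → Fin k) (a b : Fin n) (h : a ≠ b) :
    resColor φ (edgeOf a b h) =
      φ (edgeOf a.castSucc b.castSucc (fun he => h (Fin.castSucc_injective n he))) := by
  exact congrArg φ (Subtype.ext (Sym2.map_pair_eq _ _ _))

lemma isGallai_resColor {n k : ℕ} {φ : Edge (n + 1) → Fin k} (hφ : IsGallai φ) :
    IsGallai (resColor φ) := by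
  intro a b c hab hbc hac
  rw [resColor_edgeOf, resColor_edgeOf, resColor_edgeOf]
  exact hφ _ _ _ _ _ _

lemma walk_change {V α : Type*} {G : SimpleGraph V} {f : V → α} :
    ∀ {a b : V}, G.Walk a b → f a ≠ f b →
      ∃ x y, G.Adj x y ∧ f x ≠ f y := by
  intro a b w
  induction w with
  | nil => intro h; exact absurd rfl h
  | @cons a c b h p ih =>
      intro hne
      by_cases hfc : f a = f c
      · exact ih (hfc ▸ hne)
      · exact ⟨a, c, h, hfc⟩

/-- Graph hom from the restricted color graph to the full one. -/
def colorHom {n k : ℕ} (φ : Edge (n + 1) → Fin k) (c : Fin k) :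
    colorGraph (resColor φ) c →g colorGraph φ c where
  toFun := Fin.castSucc
  map_rel' := by
    rintro a b ⟨hab, hc⟩
    refine ⟨fun he => hab (Fin.castSucc_injective n he), ?_⟩
    rw [resColor_edgeOf φ a b hab] at hc
    exact hc


/-- Every Gallai coloring of `K_n` contains a monochromatic spanning tree: some color
class forms a connected spanning subgraph. -/
theorem monochromatic_spanning_tree (n k : ℕ) (hn : 1 ≤ n) (hk : 1 ≤ k)
    (φ : Edge n → Fin k) (hφ : IsGallai φ) :
    ∃ c : Fin k, (colorGraph φ c).Connected := by
  induction n with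
  | zero => omega
  | succ n ih =>
    rcases Nat.eq_zero_or_pos n with rfl | hn'
    · refine ⟨⟨0, hk⟩, SimpleGraph.Connected.mk ?_⟩
      intro a b
      have : a = b := Fin.ext (by omega)
      exact this ▸ SimpleGraph.Reachable.refl a
    · -- inductive step
      set v : Fin (n + 1) := Fin.last n with hv
      have hvne : ∀ a : Fin n, a.castSucc ≠ v := fun a => (Fin.castSucc_lt_last a).ne
      set f : Fin n → Fin k := fun a => φ (edgeOf a.castSucc v (hvne a)) with hf
      obtain ⟨c, hc⟩ := ih hn' (resColor φ) (isGallai_resColor hφ)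
      obtain ⟨a₀⟩ : Nonempty (Fin n) := ⟨⟨0, hn'⟩⟩
      by_cases hcase : ∃ a : Fin n, f a = c
      · -- some edge to v has color c
        obtain ⟨a, ha⟩ := hcase
        refine ⟨c, SimpleGraph.Connected.mk ?_⟩
        have hva : SimpleGraph.Reachable (colorGraph φ c) v a.castSucc := by
          refine SimpleGraph.Adj.reachable ?_
          exact (SimpleGraph.Adj.symm (G := colorGraph φ c) ⟨hvne a, ha⟩)
        have key : ∀ w : Fin (n + 1), SimpleGraph.Reachable (colorGraph φ c) w v := by
          intro w
          rcases eq_or_ne w v with rfl | hw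
          · exact SimpleGraph.Reachable.refl _
          · obtain ⟨u, rfl⟩ := Fin.exists_castSucc_eq.mpr hw
            have h1 : SimpleGraph.Reachable (colorGraph (resColor φ) c) u a :=
              hc.preconnected u a
            exact ((h1.map (colorHom φ c)).trans hva.symm)
        intro x y
        exact (key x).trans (key y).symm
      · push_neg at hcase
        -- no edge to v has color c; claim all edges to v have the same color
        have hsame : ∀ a : Fin n, f a = f a₀ := by
          intro a
          by_contra hne
          obtain ⟨w⟩ := hc.preconnected a a₀
          obtain ⟨x, y, ⟨hxy, hcol⟩, hfxy⟩ := walk_change w hne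
          -- triangle x.castSucc, y.castSucc, v
          have hcol' : φ (edgeOf x.castSucc y.castSucc
              (fun he => hxy (Fin.castSucc_injective n he))) = c := by
            rw [resColor_edgeOf φ x y hxy] at hcol; exact hcol
          rcases hφ x.castSucc y.castSucc v
              (fun he => hxy (Fin.castSucc_injective n he)) (hvne y) (hvne x) with
            h1 | h2 | h3
          · exact hcase y (h1.symm.trans hcol')
          · exact hfxy h2.symm
          · exact hcase x (h3.symm.trans hcol')
        -- the star at v in color f a₀ is spanning
        refine ⟨f a₀, SimpleGraph.Connected.mk ?_⟩
        have key : ∀ w : Fin (n + 1), SimpleGraph.Reachable (colorGraph φ (f a₀)) w v := by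
          intro w
          rcases eq_or_ne w v with rfl | hw
          · exact SimpleGraph.Reachable.refl _
          · obtain ⟨u, rfl⟩ := Fin.exists_castSucc_eq.mpr hw
            exact SimpleGraph.Adj.reachable ⟨hvne u, hsame u⟩
        intro x y
        exact (key x).trans (key y).symm
end
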